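/- arXiv:1211.1714 — 2 statements merged into one kernel-verified Lean document; each statement's English description precedes it below -/
import Mathlib

section
/- If M is a matching of P_10 such that every component of P_10 − M is 2-connected with an even number of vertices, then P_10 − M is not a hamiltonian circuit, and P_10 − M is homeomorphic to a 2-connected cubic graph. -/
open SimpleGraph

/-- Degree of a vertex, via the cardinality of its neighbor set. -/
noncomputable def hdeg {V : Type*} (G : SimpleGraph V) (v : V) : ℕ :=
  {w | G.Adj v w}.ncard

/-- A cubic graph: every vertex has degree 3. -/
def IsCubic {V : Type*} (G : SimpleGraph V) : Prop := ∀ v, hdeg G v = 3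

/-- A 2-connected graph: at least 3 vertices and deleting any vertex leaves it connected. -/
def TwoConnected {V : Type*} (G : SimpleGraph V) : Prop :=
  3 ≤ Nat.card V ∧ ∀ v : V, (G.induce {v}ᶜ).Connected

/-- A 3-connected graph: at least 4 vertices and deleting any two vertices leaves it connected. -/
def ThreeConnected {V : Type*} (G : SimpleGraph V) : Prop :=
  4 ≤ Nat.card V ∧ ∀ v w : V, v ≠ w → (G.induce ({v, w} : Set V)ᶜ).Connected

/-- Edge list of the Petersen graph on `Fin 10` (vertex 9 has neighbors 4, 6, 7). -/
def petEdges : List (Fin 10 × Fin 10) :=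
  [(0,1),(1,2),(2,3),(3,4),(4,0),(0,5),(1,6),(2,7),(3,8),(4,9),(5,7),(7,9),(9,6),(6,8),(8,5)]

/-- The Petersen graph `P₁₀`. -/
def Pet : SimpleGraph (Fin 10) := SimpleGraph.fromRel (fun a b => (a, b) ∈ petEdges)

/-- Edge list of `P = P₁₀ - z` on `Fin 9` (where `z` was vertex 9);
its three 2-valent vertices are 4, 6, 7. -/
def pEdges : List (Fin 9 × Fin 9) :=
  [(0,1),(1,2),(2,3),(3,4),(4,0),(0,5),(1,6),(2,7),(3,8),(5,7),(6,8),(8,5)]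

/-- The graph `P = P₁₀ - z`, the Petersen graph minus one vertex. -/
def Pgr : SimpleGraph (Fin 9) := SimpleGraph.fromRel (fun a b => (a, b) ∈ pEdges)

/-- The three 2-valent vertices of `P` (as targets of the port assignment). -/
def portIdx : ℕ → Fin 9
  | 0 => 4
  | 1 => 6
  | _ => 7

/-- Port assignment: to which 2-valent vertex of the copy of `P` replacing `u` the
neighbor `v` of `u` gets attached (neighbors are ordered by the injective encoding `enc`). -/
noncomputable def port {V : Type*} (G : SimpleGraph V) (enc : V → ℕ) (u v : V) : Fin 9 :=
  portIdx (Nat.card {w : V | G.Adj u w ∧ enc w < enc v})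

/-- Simultaneous `P`-inflation at every vertex of `G`. -/
noncomputable def inflate {V : Type*} (G : SimpleGraph V) (enc : V → ℕ) :
    SimpleGraph (V × Fin 9) where
  Adj a b :=
    (a.1 = b.1 ∧ Pgr.Adj a.2 b.2) ∨
    (G.Adj a.1 b.1 ∧ a.2 = port G enc a.1 b.1 ∧ b.2 = port G enc b.1 a.1)
  symm := by
    constructor
    rintro a b (⟨h1, h2⟩ | ⟨h1, h2, h3⟩)
    · exact Or.inl ⟨h1.symm, h2.symm⟩
    · exact Or.inr ⟨h1.symm, h3, h2⟩
  loopless := by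
    constructor
    rintro a (⟨-, h⟩ | ⟨h, -, -⟩)
    · exact Pgr.irrefl h
    · exact G.irrefl h

/-- A graph bundled with an injective-style encoding of its vertices into `ℕ`. -/
structure GE where
  V : Type
  G : SimpleGraph V
  enc : V → ℕ

/-- One round of simultaneous `P`-inflation. -/
noncomputable def step (A : GE) : GE :=
  ⟨A.V × Fin 9, inflate A.G A.enc, fun p => Nat.pair (A.enc p.1) p.2.val⟩

/-- The iterated Petersen graph `P₁₀ᵏ`. -/
noncomputable def ItP10 : ℕ → GE
  | 0 => ⟨Fin 10, Pet, Fin.val⟩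
  | k + 1 => step (ItP10 k)

/-- The iterated graph `Pᵏ` (starting from `P = P₁₀ - z`). -/
noncomputable def ItP : ℕ → GE
  | 0 => ⟨Fin 9, Pgr, Fin.val⟩
  | k + 1 => step (ItP k)

/-- The canonical copy of `P^{k-1}` in `P₁₀ᵏ` containing a given vertex,
recorded by the corresponding vertex of `P₁₀`. -/
noncomputable def baseOf : (k : ℕ) → (ItP10 k).V → Fin 10
  | 0 => id
  | k + 1 => fun p => baseOf k p.1

/-- The parameter `l(G)`: minimum over circuits `C` of the maximum over vertices `v`
of the distance `d(C, v)`. -/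
noncomputable def ell {V : Type*} (G : SimpleGraph V) : ℕ :=
  sInf { n | ∃ (v : V) (w : G.Walk v v), w.IsCycle ∧ ∀ u : V, ∃ x ∈ w.support, G.dist x u ≤ n }

/-- `M` is a matching of `G`: a set of edges of `G`, pairwise not sharing a vertex. -/
def IsMatchingSet {V : Type*} (G : SimpleGraph V) (M : Set (Sym2 V)) : Prop :=
  M ⊆ G.edgeSet ∧ ∀ e ∈ M, ∀ f ∈ M, e ≠ f → ∀ v : V, ¬(v ∈ e ∧ v ∈ f)

/-- Every connected component of `H` has an even number of vertices. -/
def EvenComponents {V : Type*} (H : SimpleGraph V) : Prop :=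
  ∀ c : H.ConnectedComponent, Even c.supp.ncard

/-- An `f`-matching: a matching `M` such that every component of `G - M` is
2-connected and has an even number of vertices. -/
def IsFMatching {V : Type*} (G : SimpleGraph V) (M : Set (Sym2 V)) : Prop :=
  IsMatchingSet G M ∧
    ∀ c : (G.deleteEdges M).ConnectedComponent,
      TwoConnected ((G.deleteEdges M).induce c.supp) ∧ Even c.supp.ncard

/-- A minimal edge cut of `G`: deleting it disconnects `G`, but deleting any
proper subset does not. -/
def IsMinEdgeCut {V : Type*} (G : SimpleGraph V) (E : Set (Sym2 V)) : Prop :=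
  E ⊆ G.edgeSet ∧ ¬(G.deleteEdges E).Connected ∧
    ∀ F : Set (Sym2 V), F ⊂ E → (G.deleteEdges F).Connected

/-- `H` is a subdivision of `F`: the vertices of `F` embed into `H` and each edge of `F`
corresponds to a path in `H`, the paths being internally disjoint and covering `H`. -/
def IsSubdivisionOf {W U : Type*} (H : SimpleGraph W) (F : SimpleGraph U) : Prop :=
  ∃ f : U ↪ W, ∃ p : ∀ u v : U, F.Adj u v → H.Walk (f u) (f v),
    (∀ u v h, (p u v h).IsPath) ∧
    (∀ u v h, ∀ w ∈ (p u v h).support, w ∈ Set.range f → w = f u ∨ w = f v) ∧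
    (∀ e : Sym2 W, e ∈ H.edgeSet ↔ ∃ u v h, e ∈ (p u v h).edges) ∧
    (∀ w : W, w ∈ Set.range f ∨ ∃ u v h, w ∈ (p u v h).support) ∧
    (∀ u v h u' v' h', ∀ w : W,
      w ∈ (p u v h).support → w ∈ (p u' v' h').support →
      w ∈ Set.range f ∨ (u = u' ∧ v = v') ∨ (u = v' ∧ v = u'))

/-- Each component of `F` is an even circuit or a 2-connected cubic graph. -/
def GoodFrameComponents {U : Type*} (F : SimpleGraph U) : Prop :=
  ∀ c : F.ConnectedComponent,
    ((F.induce c.supp).Connected ∧ (∀ v, hdeg (F.induce c.supp) v = 2) ∧ Even c.supp.ncard) ∨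
    (TwoConnected (F.induce c.supp) ∧ IsCubic (F.induce c.supp))

/-- `F` is a frame of `G`. -/
def IsFrame {U V : Type*} (F : SimpleGraph U) (G : SimpleGraph V) : Prop :=
  GoodFrameComponents F ∧
    ∃ H : SimpleGraph V, H ≤ G ∧ IsSubdivisionOf H F ∧ EvenComponents H

/-- A proper 3-edge-coloring of `G`. -/
def ProperEdgeColoring {V : Type*} (G : SimpleGraph V) (f : Sym2 V → Fin 3) : Prop :=
  ∀ u v w : V, G.Adj u v → G.Adj u w → v ≠ w → f s(u, v) ≠ f s(u, w)

/-- The spanning subgraph of edges whose color is different from `c`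
(i.e. the union of the other two color classes). -/
def twoClassSub {V : Type*} (G : SimpleGraph V) (f : Sym2 V → Fin 3) (c : Fin 3) :
    SimpleGraph V where
  Adj u v := G.Adj u v ∧ f s(u, v) ≠ c
  symm := by
    constructor
    rintro u v ⟨h1, h2⟩
    exact ⟨h1.symm, by rwa [Sym2.eq_swap]⟩
  loopless := ⟨fun v h => G.irrefl h.1⟩

/-- A Kotzig graph: a cubic graph with a proper 3-edge-coloring in which any two
color classes form a hamiltonian circuit. -/
def IsKotzig {V : Type*} (G : SimpleGraph V) : Prop :=
  IsCubic G ∧ ∃ f : Sym2 V → Fin 3, ProperEdgeColoring G f ∧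
    ∀ c : Fin 3, (twoClassSub G f c).Connected ∧ ∀ v, hdeg (twoClassSub G f c) v = 2

/-- The family `Fam` is an even subdivision-factor of `G`. -/
def IsEvenSubdivFactor {ι : Type*} (Fam : ι → Σ n : ℕ, SimpleGraph (Fin n))
    {V : Type*} (G : SimpleGraph V) : Prop :=
  ∃ H : SimpleGraph V, H ≤ G ∧ ∀ c : H.ConnectedComponent,
    Even c.supp.ncard ∧ ∃ i, IsSubdivisionOf (H.induce c.supp) (Fam i).2

/-!
Each component of `P₁₀ - M` is 2-connected, so every vertex has two neighbours inside it; as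
`P₁₀` has neither triangles nor 4-circuits, such a component has at least 5 vertices, hence at
least 6, being even. Two of them do not fit into 10 vertices, so `P₁₀ - M` is connected, and
2-connected hence bridgeless. If it were 2-regular, `M` would be a perfect matching; but
removing any perfect matching of `P₁₀` leaves two disjoint 5-circuits.
-/

section General

variable {V : Type*} {G : SimpleGraph V}

lemma TwoConnected.exists_adj_ne (h : TwoConnected G) (v u : V) : ∃ w, G.Adj v w ∧ w ≠ u := by
  have : Finite V := Nat.finite_of_card_ne_zero (by have := h.1; omega)
  have three_le : 3 ≤ ENat.card V := by
    rw [ENat.card_eq_coe_natCard]; exact_mod_cast h.1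
  have avoid (t : V) (htv : t ≠ v) : ∃ w, G.Adj v w ∧ w ≠ t := by
    obtain ⟨x, hxt, hxv⟩ := ENat.exists_ne_ne_of_three_le three_le t v
    obtain ⟨p⟩ := (h.2 t).preconnected ⟨v, htv.symm⟩ ⟨x, hxt⟩
    exact ⟨p.snd, p.adj_snd (p.not_nil_of_ne fun h => hxv (congrArg Subtype.val h).symm),
      p.snd.2⟩
  by_cases huv : u = v
  · obtain ⟨t, htv, -⟩ := ENat.exists_ne_ne_of_three_le three_le v v
    obtain ⟨w, hw, -⟩ := avoid t htv
    exact ⟨w, hw, huv ▸ hw.ne'⟩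
  · exact avoid u huv

lemma TwoConnected.reachable_deleteEdges (h : TwoConnected G) (u v : V) :
    (G.deleteEdges {s(u, v)}).Reachable u v := by
  obtain ⟨w, huw, hwv⟩ := h.exists_adj_ne u v
  have hw : w ∈ ({u}ᶜ : Set V) := huw.ne'
  rcases eq_or_ne v u with rfl | hv
  · rfl
  have hv' : v ∈ ({u}ᶜ : Set V) := hv
  let hom : G.induce {u}ᶜ →g G.deleteEdges {s(u, v)} :=
    ⟨Subtype.val, fun {x y} hxy => ⟨hxy, fun he =>
      (Sym2.eq_iff.mp he.1).elim (fun h => x.2 h.1) (fun h => y.2 h.2)⟩⟩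
  have hwu : (G.deleteEdges {s(u, v)}).Adj u w := ⟨huw, fun he =>
    (Sym2.eq_iff.mp he.1).elim (fun h => hwv h.2) (fun h => hv h.1.symm)⟩
  exact hwu.reachable.trans (((h.2 u).preconnected ⟨w, hw⟩ ⟨v, hv'⟩).map hom)

lemma SimpleGraph.reachable_deleteEdges_of_twoConnected_induce {s : Set V}
    (h : TwoConnected (G.induce s)) {u v : V} (hu : u ∈ s) (hv : v ∈ s) :
    (G.deleteEdges {s(u, v)}).Reachable u v := by
  let hom : (G.induce s).deleteEdges {s(⟨u, hu⟩, ⟨v, hv⟩)} →g G.deleteEdges {s(u, v)} :=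
    ⟨Subtype.val, fun {x y} hxy =>
      ⟨hxy.1, fun he => hxy.2 ⟨Sym2.map.injective Subtype.val_injective he.1, hxy.1.ne⟩⟩⟩
  exact (h.reachable_deleteEdges ⟨u, hu⟩ ⟨v, hv⟩).map hom

lemma SimpleGraph.five_le_ncard_of_forall_exists_adj_ne
    (hK3 : ∀ x u v, G.Adj x u → G.Adj x v → ¬ G.Adj u v)
    (hC4 : ∀ x u, G.Adj x u → ∀ v, G.Adj x v → u ≠ v → ∀ y, G.Adj y u → G.Adj y v → x = y)
    {s : Set V} (hfin : s.Finite) (hne : s.Nonempty)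
    (hs : ∀ a ∈ s, ∀ t ∈ s, ∃ b ∈ s, G.Adj a b ∧ b ≠ t) : 5 ≤ s.ncard := by
  classical
  obtain ⟨x, hx⟩ := hne
  obtain ⟨u, hu, hxu, -⟩ := hs x hx x hx
  obtain ⟨v, hv, hxv, hvu⟩ := hs x hx u hu
  obtain ⟨y, hy, huy, hyx⟩ := hs u hu x hx
  obtain ⟨z, hz, hvz, hzx⟩ := hs v hv x hx
  have hyv : y ≠ v := fun h => hK3 x u v hxu hxv (h ▸ huy)
  have hzu : z ≠ u := fun h => hK3 x v u hxv hxu (h ▸ hvz)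
  have hyz : y ≠ z := fun h =>
    hyx (hC4 x u hxu v hxv hvu.symm y huy.symm (h ▸ hvz.symm)).symm
  have hcard : ({x, u, v, y, z} : Finset V).card = 5 := by
    simp [hxu.ne, hxv.ne, hyx.symm, hzx.symm, hvu.symm, huy.ne, hzu.symm, hyv.symm, hvz.ne, hyz]
  calc 5 = ({x, u, v, y, z} : Finset V).card := hcard.symm
    _ ≤ s.ncard := by
      rw [← Set.ncard_coe_finset]
      exact Set.ncard_le_ncard (by simp [Set.insert_subset_iff, *]) hfin

lemma SimpleGraph.preconnected_of_forall_lt_two_mul_ncard_supp [Finite V]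
    (h : ∀ c : G.ConnectedComponent, Nat.card V < 2 * c.supp.ncard) : G.Preconnected := by
  intro u v
  by_contra huv
  have hne : G.connectedComponentMk u ≠ G.connectedComponentMk v :=
    fun h => huv (ConnectedComponent.exact h)
  have hunion := Set.ncard_union_eq (G.pairwise_disjoint_supp_connectedComponent hne)
    (Set.toFinite _) (Set.toFinite _)
  have hle :=
    Set.ncard_le_card ((G.connectedComponentMk u).supp ∪ (G.connectedComponentMk v).supp)
  have hu := h (G.connectedComponentMk u)
  have hv := h (G.connectedComponentMk v)
  omega

lemma SimpleGraph.Reachable.mem_of_forall_adj_mem {S : Set V}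
    (hS : ∀ a ∈ S, ∀ b, G.Adj a b → b ∈ S) {a b : V} (h : G.Reachable a b) (ha : a ∈ S) :
    b ∈ S := by
  obtain ⟨p⟩ := h
  induction p with
  | nil => exact ha
  | cons hadj _ ih => exact ih (hS _ ha _ hadj)

lemma hdeg_eq_degree (v : V) [Fintype (G.neighborSet v)] : hdeg G v = G.degree v := by
  rw [hdeg, ← Nat.card_coe_set_eq]
  change Nat.card (G.neighborSet v) = _
  rw [Nat.card_eq_fintype_card, card_neighborSet_eq_degree]

lemma exists_adj_mem_of_hdeg_deleteEdges_ne {M : Set (Sym2 V)} {v : V}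
    (h : hdeg (G.deleteEdges M) v ≠ hdeg G v) : ∃ w, G.Adj v w ∧ s(v, w) ∈ M := by
  contrapose! h
  simp only [hdeg, deleteEdges_adj]
  congr
  ext w
  exact ⟨And.left, fun hw => ⟨hw, h w hw⟩⟩

lemma IsMatchingSet.eq_of_mem {M : Set (Sym2 V)} (hM : IsMatchingSet G M) {v w w' : V}
    (h : s(v, w) ∈ M) (h' : s(v, w') ∈ M) : w = w' := by
  by_contra hne
  exact hM.2 _ h _ h' (fun he => hne (Sym2.congr_right.mp he)) v
    ⟨Sym2.mem_mk_left v w, Sym2.mem_mk_left v w'⟩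

end General

namespace Pet

instance instDecidableRelAdj : DecidableRel Pet.Adj := fun a b =>
  inferInstanceAs (Decidable (a ≠ b ∧ ((a, b) ∈ petEdges ∨ (b, a) ∈ petEdges)))

lemma not_adj_of_adj_of_adj : ∀ x u v, Pet.Adj x u → Pet.Adj x v → ¬ Pet.Adj u v := by
  decide

lemma eq_of_two_common_adj : ∀ x u, Pet.Adj x u → ∀ v, Pet.Adj x v → u ≠ v →
    ∀ y, Pet.Adj y u → Pet.Adj y v → x = y := by
  decide

lemma degree_eq_three : ∀ v, Pet.degree v = 3 := by
  decide

lemma six_le_ncard_supp {H : SimpleGraph (Fin 10)} (hH : H ≤ Pet) (c : H.ConnectedComponent)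
    (h : TwoConnected (H.induce c.supp)) (heven : Even c.supp.ncard) : 6 ≤ c.supp.ncard := by
  have hfive : 5 ≤ c.supp.ncard := by
    refine five_le_ncard_of_forall_exists_adj_ne not_adj_of_adj_of_adj eq_of_two_common_adj
      (Set.toFinite _) c.nonempty_supp fun a ha t ht => ?_
    obtain ⟨⟨b, hb⟩, hab, hbt⟩ := h.exists_adj_ne ⟨a, ha⟩ ⟨t, ht⟩
    exact ⟨b, hb, hH hab, fun hbt' => hbt (Subtype.ext hbt')⟩
  rcases heven with ⟨k, hk⟩
  omega

/- `pₖ` is the partner of `k` in a perfect matching. Each consistency constraint follows the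
binder that completes it, so that `decide` discards inconsistent partial choices early. -/
set_option maxRecDepth 10000 in
set_option synthInstance.maxSize 256 in
lemma exists_cut_of_perfect_matching :
    ∀ p0 : Fin 10, Pet.Adj 0 p0 → ∀ p1, Pet.Adj 1 p1 → (p0 = 1 ↔ p1 = 0) →
    ∀ p2, Pet.Adj 2 p2 → (p1 = 2 ↔ p2 = 1) →
    ∀ p3, Pet.Adj 3 p3 → (p2 = 3 ↔ p3 = 2) →
    ∀ p4, Pet.Adj 4 p4 → (p3 = 4 ↔ p4 = 3) → (p0 = 4 ↔ p4 = 0) →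
    ∀ p5, Pet.Adj 5 p5 → (p0 = 5 ↔ p5 = 0) →
    ∀ p6, Pet.Adj 6 p6 → (p1 = 6 ↔ p6 = 1) →
    ∀ p7, Pet.Adj 7 p7 → (p2 = 7 ↔ p7 = 2) → (p5 = 7 ↔ p7 = 5) →
    ∀ p8, Pet.Adj 8 p8 → (p3 = 8 ↔ p8 = 3) → (p6 = 8 ↔ p8 = 6) → (p5 = 8 ↔ p8 = 5) →
    ∀ p9, Pet.Adj 9 p9 → (p4 = 9 ↔ p9 = 4) → (p7 = 9 ↔ p9 = 7) → (p6 = 9 ↔ p9 = 6) →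
    ∃ S : Finset (Fin 10), 0 ∈ S ∧ S ≠ Finset.univ ∧
      ∀ a ∈ S, ∀ b, Pet.Adj a b → b ∉ S → ![p0, p1, p2, p3, p4, p5, p6, p7, p8, p9] a = b := by
  decide

lemma not_connected_deleteEdges_of_forall_exists_mem {M : Set (Sym2 (Fin 10))}
    (hM : IsMatchingSet Pet M) (hcov : ∀ v, ∃ w, Pet.Adj v w ∧ s(v, w) ∈ M) :
    ¬ (Pet.deleteEdges M).Connected := by
  choose p hadj hp using hcov
  have hinv (v w : Fin 10) (h : p v = w) : p w = v :=
    hM.eq_of_mem (hp w) (by rw [Sym2.eq_swap, ← h]; exact hp v)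
  obtain ⟨S, h0, hSuniv, hS⟩ := exists_cut_of_perfect_matching
    (p 0) (hadj 0) (p 1) (hadj 1) ⟨hinv _ _, hinv _ _⟩
    (p 2) (hadj 2) ⟨hinv _ _, hinv _ _⟩
    (p 3) (hadj 3) ⟨hinv _ _, hinv _ _⟩
    (p 4) (hadj 4) ⟨hinv _ _, hinv _ _⟩ ⟨hinv _ _, hinv _ _⟩
    (p 5) (hadj 5) ⟨hinv _ _, hinv _ _⟩
    (p 6) (hadj 6) ⟨hinv _ _, hinv _ _⟩
    (p 7) (hadj 7) ⟨hinv _ _, hinv _ _⟩ ⟨hinv _ _, hinv _ _⟩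
    (p 8) (hadj 8) ⟨hinv _ _, hinv _ _⟩ ⟨hinv _ _, hinv _ _⟩ ⟨hinv _ _, hinv _ _⟩
    (p 9) (hadj 9) ⟨hinv _ _, hinv _ _⟩ ⟨hinv _ _, hinv _ _⟩ ⟨hinv _ _, hinv _ _⟩
  have hvec : ![p 0, p 1, p 2, p 3, p 4, p 5, p 6, p 7, p 8, p 9] = p := by
    ext i; fin_cases i <;> rfl
  rw [hvec] at hS
  obtain ⟨x, hx⟩ := not_forall.mp (mt Finset.eq_univ_iff_forall.mpr hSuniv)
  intro hconn
  refine hx ((hconn.preconnected 0 x).mem_of_forall_adj_mem (S := S) (fun a ha b hab => ?_) h0)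
  rw [deleteEdges_adj] at hab
  by_contra hb
  exact hab.2 (hS a ha b hab.1 hb ▸ hp a)

end Pet

/-- if `M` is an `f`-matching of the Petersen graph, then
`P₁₀ - M` is not a hamiltonian circuit, and `P₁₀ - M` is homeomorphic to a
2-connected cubic graph (connected, bridgeless and not a circuit). -/
theorem stmt_15 (M : Set (Sym2 (Fin 10))) (hM : IsFMatching Pet M) :
    ¬((Pet.deleteEdges M).Connected ∧ ∀ v, hdeg (Pet.deleteEdges M) v = 2) ∧
    ((Pet.deleteEdges M).Connected ∧
      (∀ e, ¬ (Pet.deleteEdges M).IsBridge e) ∧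
      ∃ v, hdeg (Pet.deleteEdges M) v ≠ 2) := by
  obtain ⟨hMatch, hComp⟩ := hM
  have hconn : (Pet.deleteEdges M).Connected := by
    refine ⟨preconnected_of_forall_lt_two_mul_ncard_supp fun c => ?_⟩
    have := Pet.six_le_ncard_supp (deleteEdges_le M) c (hComp c).1 (hComp c).2
    simp only [Nat.card_eq_fintype_card, Fintype.card_fin]
    omega
  have hirregular : ∃ v, hdeg (Pet.deleteEdges M) v ≠ 2 := by
    by_contra! hreg
    refine Pet.not_connected_deleteEdges_of_forall_exists_mem hMatch
      (fun v => exists_adj_mem_of_hdeg_deleteEdges_ne ?_) hconn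
    rw [hreg v, hdeg_eq_degree, Pet.degree_eq_three]
    decide
  refine ⟨fun h => ?_, hconn, fun e => ?_, hirregular⟩
  · obtain ⟨v, hv⟩ := hirregular
    exact hv (h.2 v)
  · induction e using Sym2.ind with
    | _ u v =>
      rw [isBridge_iff, not_not]
      let c := (Pet.deleteEdges M).connectedComponentMk u
      exact reachable_deleteEdges_of_twoConnected_induce (hComp c).1 rfl
        (ConnectedComponent.sound (hconn.preconnected v u))
end

section
/- Define p_k as the maximum over vertices v of P^k of the minimum, over paths α from v to the set W_k of 2-valent vertices of P^k, of the number of distinct copies of P met by α. Then p_0 = 1 and p_{k+1} = 2^{2k+1} for all natural numbers k. -/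
open SimpleGraph

/-!
Every copy of `P` is entered and left through its three 2-valent vertices (ports), which are
pairwise at distance `3` in `P`. A path in `P^{k+1}` projects onto a walk in `P^k` whose vertices
are exactly the copies it meets, and conversely a shortest path in `P^k` to the 2-valent vertices
lifts to a path meeting only the copies over it. Hence `p_{k+1} = d_k + 1`, where `d_k` is the
largest distance in `P^k` to the 2-valent vertices.

After inflation each copy crossed costs `3 + 1 = 4` and the last one at most `3`, so distances
`t` become at most `4 t + 3`; at the port joining two adjacent vertices that both realise `d_k`
this is attained. So `d_{k+1} = 4 d_k + 3` with `d_0 = 1`, i.e. `d_k = 2^{2k+1} - 1`.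
-/

instance : DecidableRel Pgr.Adj := fun a b =>
  decidable_of_iff (a ≠ b ∧ ((a, b) ∈ pEdges ∨ (b, a) ∈ pEdges)) (by rw [Pgr, fromRel_adj])

def pPorts : Finset (Fin 9) := {4, 6, 7}

/-- `portDist p i` is the distance in `P` from `i` to the port `p`; the last row serves `p = 7`. -/
def portDist : Fin 9 → Fin 9 → ℕ
  | 4 => ![1, 2, 2, 1, 0, 2, 3, 3, 2]
  | 6 => ![2, 1, 2, 2, 3, 2, 0, 3, 1]
  | _ => ![2, 2, 1, 2, 3, 1, 3, 0, 2]

lemma portDist_le_succ_of_adj :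
    ∀ p ∈ pPorts, ∀ i j, Pgr.Adj i j → portDist p i ≤ portDist p j + 1 := by
  decide

lemma exists_adj_portDist_succ_eq : ∀ p ∈ pPorts, ∀ i, portDist p i ≠ 0 →
    ∃ j, Pgr.Adj i j ∧ portDist p j + 1 = portDist p i := by
  decide

lemma portDist_le_three : ∀ p i, portDist p i ≤ 3 := by decide

lemma portDist_eq_zero_iff : ∀ p ∈ pPorts, ∀ i, portDist p i = 0 ↔ i = p := by decide

lemma portDist_eq_three : ∀ p ∈ pPorts, ∀ q ∈ pPorts, p ≠ q → portDist p q = 3 := by decide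

lemma mem_pPorts_or_exists_adj : ∀ i, i ∈ pPorts ∨ ∃ j ∈ pPorts, Pgr.Adj i j := by decide

lemma hdeg_eq_card_filter {V : Type*} [Fintype V] (G : SimpleGraph V) [DecidableRel G.Adj] (v : V) :
    hdeg G v = (Finset.univ.filter (G.Adj v)).card := by
  rw [hdeg, ← Set.ncard_coe_finset]; simp

lemma hdeg_Pgr (i : Fin 9) : hdeg Pgr i = if i ∈ pPorts then 2 else 3 := by
  rw [hdeg_eq_card_filter]; revert i; decide

lemma reachable_of_mem_pPorts {p : Fin 9} (hp : p ∈ pPorts) (i : Fin 9) : Pgr.Reachable i p := by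
  induction hn : portDist p i generalizing i with
  | zero => rw [(portDist_eq_zero_iff p hp i).1 hn]
  | succ n ih =>
    obtain ⟨j, hij, hj⟩ := exists_adj_portDist_succ_eq p hp i (by omega)
    exact hij.reachable.trans (ih j (by omega))

section Inflation

variable {V : Type*} (G : SimpleGraph V) (enc : V → ℕ)

structure Admissible : Prop where
  enc_injective : Function.Injective enc
  hdeg_two_or_three : ∀ v, hdeg G v = 2 ∨ hdeg G v = 3

lemma inflate_adj (a b : V × Fin 9) :
    (inflate G enc).Adj a b ↔
      (a.1 = b.1 ∧ Pgr.Adj a.2 b.2) ∨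
      (G.Adj a.1 b.1 ∧ a.2 = port G enc a.1 b.1 ∧ b.2 = port G enc b.1 a.1) :=
  Iff.rfl

lemma setOf_inflate_adj (u : V) (i : Fin 9) :
    {b | (inflate G enc).Adj (u, i) b} =
      (fun j => (u, j)) '' {j | Pgr.Adj i j} ∪
      {b | G.Adj u b.1 ∧ i = port G enc u b.1 ∧ b.2 = port G enc b.1 u} := by
  ext ⟨v, j⟩
  simp only [Set.mem_ofPred_eq, inflate_adj, Set.mem_union, Set.mem_image, Prod.mk.injEq]
  constructor
  · rintro (⟨rfl, h⟩ | h)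
    exacts [Or.inl ⟨j, h, rfl, rfl⟩, Or.inr h]
  · rintro (⟨j, h, rfl, rfl⟩ | h)
    exacts [Or.inl ⟨rfl, h⟩, Or.inr h]

noncomputable def nbrRank (u v : V) : ℕ := Nat.card {w : V | G.Adj u w ∧ enc w < enc v}

lemma port_eq_portIdx (u v : V) : port G enc u v = portIdx (nbrRank G enc u v) := rfl

lemma port_mem_pPorts (u v : V) : port G enc u v ∈ pPorts := by
  rw [port_eq_portIdx]
  rcases nbrRank G enc u v with _ | _ | n <;> simp [portIdx, pPorts]

variable {G enc} [Finite V]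

lemma nbrRank_lt_nbrRank {u x y : V} (hx : G.Adj u x) (hxy : enc x < enc y) :
    nbrRank G enc u x < nbrRank G enc u y := by
  rw [nbrRank, nbrRank, Nat.card_coe_set_eq, Nat.card_coe_set_eq]
  refine Set.ncard_lt_ncard ⟨fun w hw => ⟨hw.1, hw.2.trans hxy⟩, fun hsub => ?_⟩ (Set.toFinite _)
  exact lt_irrefl _ (hsub ⟨hx, hxy⟩).2

lemma nbrRank_lt_hdeg {u v : V} (h : G.Adj u v) : nbrRank G enc u v < hdeg G u := by
  rw [nbrRank, hdeg, Nat.card_coe_set_eq]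
  refine Set.ncard_lt_ncard ⟨fun w hw => hw.1, fun hsub => ?_⟩ (Set.toFinite _)
  exact lt_irrefl _ (hsub h).2

lemma port_eq_four_or_six {u v : V} (hu : hdeg G u = 2) (h : G.Adj u v) :
    port G enc u v = 4 ∨ port G enc u v = 6 := by
  have : nbrRank G enc u v < 2 := hu ▸ nbrRank_lt_hdeg h
  rw [port_eq_portIdx]
  interval_cases nbrRank G enc u v <;> simp [portIdx]

lemma port_injective (hA : Admissible G enc) {u v v' : V} (hv : G.Adj u v) (hv' : G.Adj u v')
    (h : port G enc u v = port G enc u v') : v = v' := by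
  have hu : hdeg G u ≤ 3 := by rcases hA.hdeg_two_or_three u with h | h <;> omega
  have hlt : nbrRank G enc u v < 3 := (nbrRank_lt_hdeg hv).trans_le hu
  have hlt' : nbrRank G enc u v' < 3 := (nbrRank_lt_hdeg hv').trans_le hu
  have hrank : nbrRank G enc u v = nbrRank G enc u v' := by
    rw [port_eq_portIdx, port_eq_portIdx] at h
    interval_cases nbrRank G enc u v <;> interval_cases nbrRank G enc u v' <;> simp_all [portIdx]
  by_contra hne
  rcases lt_or_gt_of_ne (hA.enc_injective.ne hne) with hlt | hlt
  · exact (nbrRank_lt_nbrRank hv hlt).ne hrank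
  · exact (nbrRank_lt_nbrRank hv' hlt).ne' hrank

variable (G enc) in
def UsedPort (u : V) (i : Fin 9) : Prop := ∃ v, G.Adj u v ∧ port G enc u v = i

lemma ncard_setOf_usedPort (hA : Admissible G enc) (u : V) :
    {i | UsedPort G enc u i}.ncard = hdeg G u := by
  have himage : {i | UsedPort G enc u i} = port G enc u '' {v | G.Adj u v} := by
    ext i; simp [UsedPort]
  rw [himage, hdeg]
  exact Set.InjOn.ncard_image fun v hv v' hv' h => port_injective hA hv hv' h

lemma usedPort_iff_of_hdeg_eq_two (hA : Admissible G enc) {u : V} (hu : hdeg G u = 2)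
    (i : Fin 9) : UsedPort G enc u i ↔ i = 4 ∨ i = 6 := by
  have hsub : {i | UsedPort G enc u i} ⊆ {4, 6} := by
    rintro _ ⟨v, hv, rfl⟩
    exact port_eq_four_or_six hu hv
  have heq := Set.eq_of_subset_of_ncard_le hsub (by
    rw [ncard_setOf_usedPort hA, hu, Set.ncard_pair (by decide)]) (Set.toFinite _)
  exact Set.ext_iff.1 heq i

lemma usedPort_iff_of_hdeg_eq_three (hA : Admissible G enc) {u : V} (hu : hdeg G u = 3)
    (i : Fin 9) : UsedPort G enc u i ↔ i ∈ pPorts := by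
  have hsub : {i | UsedPort G enc u i} ⊆ ↑pPorts := by
    rintro _ ⟨v, -, rfl⟩
    exact port_mem_pPorts G enc u v
  have heq := Set.eq_of_subset_of_ncard_le hsub (by
    rw [ncard_setOf_usedPort hA, hu, Set.ncard_coe_finset]; rfl) (Set.toFinite _)
  exact Set.ext_iff.1 heq i

open Classical in
lemma hdeg_inflate_eq_add (hA : Admissible G enc) (u : V) (i : Fin 9) :
    hdeg (inflate G enc) (u, i) = hdeg Pgr i + if UsedPort G enc u i then 1 else 0 := by
  have hfiber : ((fun j => (u, j)) '' {j | Pgr.Adj i j}).ncard = hdeg Pgr i :=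
    Set.ncard_image_of_injective _ fun j j' h => (Prod.mk.inj h).2
  rw [hdeg, setOf_inflate_adj]
  split_ifs with hused
  · obtain ⟨v, hv, hvi⟩ := hused
    have hcross : {b : V × Fin 9 | G.Adj u b.1 ∧ i = port G enc u b.1 ∧ b.2 = port G enc b.1 u} =
        {(v, port G enc v u)} := by
      ext ⟨v', j⟩
      simp only [Set.mem_ofPred_eq, Set.mem_singleton_iff, Prod.mk.injEq]
      constructor
      · rintro ⟨hv', hi, rfl⟩
        obtain rfl := port_injective hA hv' hv (hi.symm.trans hvi.symm)
        exact ⟨rfl, rfl⟩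
      · rintro ⟨rfl, rfl⟩
        exact ⟨hv, hvi.symm, rfl⟩
    rw [hcross, Set.ncard_union_eq _ (Set.toFinite _) (Set.toFinite _), hfiber,
      Set.ncard_singleton]
    rw [Set.disjoint_singleton_right]
    rintro ⟨j, -, hj⟩
    exact G.ne_of_adj hv (congrArg Prod.fst hj)
  · have hcross : {b : V × Fin 9 | G.Adj u b.1 ∧ i = port G enc u b.1 ∧ b.2 = port G enc b.1 u} =
        ∅ := Set.eq_empty_of_forall_notMem fun b hb => hused ⟨b.1, hb.1, hb.2.1.symm⟩
    rw [hcross, Set.union_empty, hfiber, Nat.add_zero]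

lemma hdeg_inflate (hA : Admissible G enc) (u : V) (i : Fin 9) :
    hdeg (inflate G enc) (u, i) = if hdeg G u = 2 ∧ i = 7 then 2 else 3 := by
  rw [hdeg_inflate_eq_add hA, hdeg_Pgr]
  rcases hA.hdeg_two_or_three u with hu | hu
  · simp only [usedPort_iff_of_hdeg_eq_two hA hu, hu]
    revert i; decide
  · simp only [usedPort_iff_of_hdeg_eq_three hA hu, hu]
    revert i; decide

lemma hdeg_inflate_eq_two_iff (hA : Admissible G enc) (u : V) (i : Fin 9) :
    hdeg (inflate G enc) (u, i) = 2 ↔ hdeg G u = 2 ∧ i = 7 := by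
  rw [hdeg_inflate hA]; split_ifs <;> simp_all

lemma admissible_inflate (hA : Admissible G enc) :
    Admissible (inflate G enc) fun p => Nat.pair (enc p.1) p.2 where
  enc_injective := by
    rintro ⟨u, i⟩ ⟨v, j⟩ h
    obtain ⟨huv, hij⟩ := Nat.pair_eq_pair.1 h
    simp only at huv hij
    rw [hA.enc_injective huv, Fin.val_injective hij]
  hdeg_two_or_three := by
    rintro ⟨u, i⟩
    rw [hdeg_inflate hA]; split_ifs <;> simp

end Inflation

section DegTwoDist

variable {V : Type*} {G : SimpleGraph V} {φ : V → ℕ}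

variable (G φ) in
/-- These conditions characterise `φ v` as the distance from `v` to the 2-valent vertices. -/
structure IsDegTwoDist : Prop where
  eq_zero : ∀ w, hdeg G w = 2 → φ w = 0
  le_succ : ∀ u v, G.Adj u v → φ u ≤ φ v + 1
  exists_lt : ∀ u, hdeg G u = 2 ∨ ∃ v, G.Adj u v ∧ φ v < φ u

lemma IsDegTwoDist.le_length (hφ : IsDegTwoDist G φ) {u w : V} (hw : hdeg G w = 2)
    (p : G.Walk u w) : φ u ≤ p.length := by
  induction p with
  | nil => simp [hφ.eq_zero _ hw]
  | cons h _ ih =>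
    have := hφ.le_succ _ _ h
    rw [Walk.length_cons]
    have := ih hw
    omega

lemma IsDegTwoDist.exists_walk (hφ : IsDegTwoDist G φ) (u : V) :
    ∃ w, hdeg G w = 2 ∧ ∃ p : G.Walk u w, p.length ≤ φ u := by
  induction hn : φ u using Nat.strong_induction_on generalizing u with
  | _ n ih =>
    rcases hφ.exists_lt u with hu | ⟨v, huv, hlt⟩
    · exact ⟨u, hu, Walk.nil, by simp⟩
    · obtain ⟨w, hw, p, hp⟩ := ih (φ v) (hn ▸ hlt) v rfl
      exact ⟨w, hw, Walk.cons huv p, by rw [Walk.length_cons]; omega⟩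

end DegTwoDist

section LiftDist

variable {V : Type*} (G : SimpleGraph V) (enc : V → ℕ) (φ : V → ℕ)

/-- The 2-valent vertices of the inflation are the free ports `(w, 7)` over 2-valent `w`.
Leaving the copy of `P` over `u` towards `v` costs `portDist` plus the crossing edge; each further
copy costs `4`, as distinct ports are at distance `3` in `P`. -/
noncomputable def liftDist (a : V × Fin 9) : ℕ :=
  sInf ({n | hdeg G a.1 = 2 ∧ n = portDist 7 a.2} ∪
    {n | ∃ v, G.Adj a.1 v ∧ n = portDist (port G enc a.1 v) a.2 + 4 * φ v + 4})

variable {G enc φ}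

lemma liftDist_le_of_hdeg_eq_two {u : V} (hu : hdeg G u = 2) (i : Fin 9) :
    liftDist G enc φ (u, i) ≤ portDist 7 i :=
  Nat.sInf_le (Or.inl ⟨hu, rfl⟩)

lemma liftDist_le_of_adj {u v : V} (h : G.Adj u v) (i : Fin 9) :
    liftDist G enc φ (u, i) ≤ portDist (port G enc u v) i + 4 * φ v + 4 :=
  Nat.sInf_le (Or.inr ⟨v, h, rfl⟩)

lemma liftDist_mem (hφ : IsDegTwoDist G φ) (u : V) (i : Fin 9) :
    liftDist G enc φ (u, i) ∈ {n | hdeg G u = 2 ∧ n = portDist 7 i} ∪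
      {n | ∃ v, G.Adj u v ∧ n = portDist (port G enc u v) i + 4 * φ v + 4} := by
  refine Nat.sInf_mem ?_
  rcases hφ.exists_lt u with hu | ⟨v, hv, -⟩
  exacts [⟨_, Or.inl ⟨hu, rfl⟩⟩, ⟨_, Or.inr ⟨v, hv, rfl⟩⟩]

lemma liftDist_le (hφ : IsDegTwoDist G φ) (u : V) (i : Fin 9) :
    liftDist G enc φ (u, i) ≤ 4 * φ u + 3 := by
  rcases hφ.exists_lt u with hu | ⟨v, hv, hlt⟩
  · have := liftDist_le_of_hdeg_eq_two (enc := enc) (φ := φ) hu i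
    have := portDist_le_three 7 i
    omega
  · have := liftDist_le_of_adj (enc := enc) (φ := φ) hv i
    have := portDist_le_three (port G enc u v) i
    omega

variable [Finite V]

lemma min_le_liftDist_port (hA : Admissible G enc) (hφ : IsDegTwoDist G φ) {u w : V}
    (h : G.Adj u w) : min (4 * φ u + 3) (4 * φ w + 4) ≤ liftDist G enc φ (u, port G enc u w) := by
  have hw := port_mem_pPorts G enc u w
  rcases liftDist_mem hφ u (port G enc u w) with ⟨hu, hn⟩ | ⟨v, hv, hn⟩ <;> rw [hn]
  · have h7 : port G enc u w ≠ 7 := by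
      rcases port_eq_four_or_six hu h with h4 | h4 <;> rw [h4] <;> decide
    rw [portDist_eq_three 7 (by decide) _ hw h7.symm, hφ.eq_zero u hu]
    omega
  · have := hφ.le_succ u v hv
    by_cases hvw : v = w
    · subst hvw
      omega
    · have hne : port G enc u v ≠ port G enc u w := fun h' => hvw (port_injective hA hv h h')
      rw [portDist_eq_three _ (port_mem_pPorts G enc u v) _ hw hne]
      omega

lemma liftDist_le_succ (hA : Admissible G enc) (hφ : IsDegTwoDist G φ) (a b : V × Fin 9)
    (h : (inflate G enc).Adj a b) : liftDist G enc φ a ≤ liftDist G enc φ b + 1 := by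
  obtain ⟨u, i⟩ := a
  obtain ⟨v, j⟩ := b
  rcases (inflate_adj G enc _ _).1 h with ⟨rfl, hij⟩ | ⟨huv, hi, hj⟩
  · rcases liftDist_mem hφ u j with ⟨hu, hn⟩ | ⟨v, hv, hn⟩ <;> rw [hn]
    · have := liftDist_le_of_hdeg_eq_two (enc := enc) (φ := φ) hu i
      have := portDist_le_succ_of_adj 7 (by decide) i j hij
      omega
    · have := liftDist_le_of_adj (enc := enc) (φ := φ) hv i
      have := portDist_le_succ_of_adj _ (port_mem_pPorts G enc u v) i j hij
      omega
  · simp only at huv hi hj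
    subst hi hj
    have hcross := liftDist_le_of_adj (enc := enc) (φ := φ) huv (port G enc u v)
    rw [(portDist_eq_zero_iff _ (port_mem_pPorts G enc u v) _).2 rfl] at hcross
    have := liftDist_le (enc := enc) hφ u (port G enc u v)
    have := min_le_liftDist_port hA hφ huv.symm
    omega

lemma liftDist_exists_lt (hA : Admissible G enc) (hφ : IsDegTwoDist G φ) (a : V × Fin 9) :
    hdeg (inflate G enc) a = 2 ∨
      ∃ b, (inflate G enc).Adj a b ∧ liftDist G enc φ b < liftDist G enc φ a := by
  obtain ⟨u, i⟩ := a
  rcases liftDist_mem hφ u i with ⟨hu, hn⟩ | ⟨v, hv, hn⟩ <;> rw [hn]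
  · by_cases hi : i = 7
    · exact Or.inl ((hdeg_inflate_eq_two_iff hA u i).2 ⟨hu, hi⟩)
    · obtain ⟨j, hij, hj⟩ := exists_adj_portDist_succ_eq 7 (by decide) i
        (fun h0 => hi ((portDist_eq_zero_iff 7 (by decide) i).1 h0))
      have := liftDist_le_of_hdeg_eq_two (enc := enc) (φ := φ) hu j
      exact Or.inr ⟨(u, j), Or.inl ⟨rfl, hij⟩, by omega⟩
  · right
    by_cases h0 : portDist (port G enc u v) i = 0
    · obtain rfl := (portDist_eq_zero_iff _ (port_mem_pPorts G enc u v) i).1 h0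
      have := liftDist_le (enc := enc) hφ v (port G enc v u)
      exact ⟨(v, port G enc v u), Or.inr ⟨hv, rfl, rfl⟩, by omega⟩
    · obtain ⟨j, hij, hj⟩ :=
        exists_adj_portDist_succ_eq _ (port_mem_pPorts G enc u v) i h0
      have := liftDist_le_of_adj (enc := enc) (φ := φ) hv j
      exact ⟨(u, j), Or.inl ⟨rfl, hij⟩, by omega⟩

lemma isDegTwoDist_liftDist (hA : Admissible G enc) (hφ : IsDegTwoDist G φ) :
    IsDegTwoDist (inflate G enc) (liftDist G enc φ) where
  eq_zero := by
    rintro ⟨u, i⟩ h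
    obtain ⟨hu, rfl⟩ := (hdeg_inflate_eq_two_iff hA u i).1 h
    exact Nat.le_zero.1 (liftDist_le_of_hdeg_eq_two hu 7)
  le_succ := liftDist_le_succ hA hφ
  exists_lt := liftDist_exists_lt hA hφ

end LiftDist

lemma List.ncard_setOf_mem_le {α : Type*} (l : List α) : {x | x ∈ l}.ncard ≤ l.length := by
  classical
  rw [← List.coe_toFinset, Set.ncard_coe_finset]
  exact List.toFinset_card_le l

lemma List.Nodup.ncard_setOf_mem {α : Type*} {l : List α} (hl : l.Nodup) :
    {x | x ∈ l}.ncard = l.length := by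
  classical
  rw [← List.coe_toFinset, Set.ncard_coe_finset, List.toFinset_card_of_nodup hl]

section Walks

variable {V : Type*} {G : SimpleGraph V} {enc : V → ℕ}

variable (G enc) in
def fiberHom (u : V) : Pgr →g inflate G enc where
  toFun j := (u, j)
  map_rel' h := Or.inl ⟨rfl, h⟩

lemma exists_walk_inflate_to_port (u : V) (i : Fin 9) {j : Fin 9} (hj : j ∈ pPorts) :
    ∃ r : (inflate G enc).Walk (u, i) (u, j), ∀ x ∈ r.support, x.1 = u := by
  refine ⟨(reachable_of_mem_pPorts hj i).some.map (fiberHom G enc u), fun x hx => ?_⟩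
  obtain ⟨j, -, rfl⟩ := List.mem_map.1 ((Walk.support_map _ _) ▸ hx)
  rfl

lemma exists_walk_inflate_fst_mem {u w : V} (q : G.Walk u w) (i : Fin 9) :
    ∃ p : (inflate G enc).Walk (u, i) (w, 7), ∀ x ∈ p.support, x.1 ∈ q.support := by
  induction q generalizing i with
  | nil =>
    obtain ⟨r, hr⟩ := exists_walk_inflate_to_port (enc := enc) _ i (show 7 ∈ pPorts by decide)
    exact ⟨r, fun x hx => by simp [hr x hx]⟩
  | @cons u v w h q ih =>
    obtain ⟨p, hp⟩ := ih (port G enc v u)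
    obtain ⟨r, hr⟩ := exists_walk_inflate_to_port u i (port_mem_pPorts G enc u v)
    refine ⟨r.append (Walk.cons (show (inflate G enc).Adj _ (v, _) from Or.inr ⟨h, rfl, rfl⟩) p),
      fun x hx => ?_⟩
    rw [Walk.support_append, Walk.support_cons, List.tail_cons, List.mem_append] at hx
    rcases hx with hx | hx
    · simp [hr x hx]
    · exact List.mem_cons_of_mem _ (hp x hx)

lemma exists_walk_support_subset_image_fst {a b : V × Fin 9} (p : (inflate G enc).Walk a b) :
    ∃ q : G.Walk a.1 b.1, ∀ x ∈ q.support, x ∈ Prod.fst '' {y | y ∈ p.support} := by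
  induction p with
  | nil => exact ⟨Walk.nil, by simp⟩
  | @cons a c b h p ih =>
    obtain ⟨q, hq⟩ := ih
    have hsub : Prod.fst '' {y | y ∈ p.support} ⊆ Prod.fst '' {y | y ∈ (Walk.cons h p).support} :=
      Set.image_mono fun y hy => List.mem_cons_of_mem _ hy
    rcases (inflate_adj G enc _ _).1 h with ⟨hac, -⟩ | ⟨hac, -, -⟩
    · exact ⟨q.copy hac.symm rfl, fun x hx => hsub (hq x (by simpa using hx))⟩
    · refine ⟨Walk.cons hac q, fun x hx => ?_⟩
      rcases List.mem_cons.1 (Walk.support_cons hac q ▸ hx) with rfl | hx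
      · exact ⟨a, List.mem_cons_self, rfl⟩
      · exact hsub (hq x hx)

end Walks

lemma Nat.sSup_range_sInf_eq {ι : Type*} {S : ι → Set ℕ} {m : ℕ}
    (hle : ∀ i, ∃ n ∈ S i, n ≤ m) (hge : ∃ i, ∀ n ∈ S i, m ≤ n) :
    sSup (Set.range fun i => sInf (S i)) = m := by
  have hbound : ∀ i, sInf (S i) ≤ m := fun i =>
    let ⟨n, hn, hnm⟩ := hle i
    (Nat.sInf_le hn).trans hnm
  obtain ⟨i, hi⟩ := hge
  obtain ⟨n, hn, -⟩ := hle i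
  refine le_antisymm (csSup_le ⟨_, i, rfl⟩ (by rintro _ ⟨j, rfl⟩; exact hbound j)) ?_
  exact (le_csInf ⟨n, hn⟩ hi).trans (le_csSup ⟨m, by rintro _ ⟨j, rfl⟩; exact hbound j⟩ ⟨i, rfl⟩)

section CopyRadius

variable {V : Type*} [Finite V] {G : SimpleGraph V} {enc : V → ℕ} {φ : V → ℕ}

lemma exists_isPath_inflate_ncard_le (hA : Admissible G enc) (hφ : IsDegTwoDist G φ)
    (a : V × Fin 9) : ∃ (w : V × Fin 9) (α : (inflate G enc).Walk a w), α.IsPath ∧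
      hdeg (inflate G enc) w = 2 ∧ (Prod.fst '' {x | x ∈ α.support}).ncard ≤ φ a.1 + 1 := by
  classical
  obtain ⟨w, hw, q, hq⟩ := hφ.exists_walk a.1
  obtain ⟨p, hp⟩ := exists_walk_inflate_fst_mem (enc := enc) q a.2
  refine ⟨(w, 7), p.bypass, p.bypass_isPath, (hdeg_inflate_eq_two_iff hA w 7).2 ⟨hw, rfl⟩, ?_⟩
  have hsub : Prod.fst '' {x | x ∈ p.bypass.support} ⊆ {x | x ∈ q.support} := by
    rintro _ ⟨x, hx, rfl⟩
    exact hp x (p.support_bypass_subset_support hx)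
  calc (Prod.fst '' {x | x ∈ p.bypass.support}).ncard
      ≤ {x | x ∈ q.support}.ncard := Set.ncard_le_ncard hsub (Set.toFinite _)
    _ ≤ q.support.length := List.ncard_setOf_mem_le _
    _ ≤ φ a.1 + 1 := by rw [Walk.length_support]; omega

lemma le_ncard_image_fst_support (hA : Admissible G enc) (hφ : IsDegTwoDist G φ)
    {a w : V × Fin 9} (α : (inflate G enc).Walk a w) (hw : hdeg (inflate G enc) w = 2) :
    φ a.1 + 1 ≤ (Prod.fst '' {x | x ∈ α.support}).ncard := by
  classical
  obtain ⟨q, hq⟩ := exists_walk_support_subset_image_fst α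
  have hw1 : hdeg G w.1 = 2 := ((hdeg_inflate_eq_two_iff hA w.1 w.2).1 hw).1
  calc φ a.1 + 1 ≤ q.bypass.length + 1 := by have := hφ.le_length hw1 q.bypass; omega
    _ = {x | x ∈ q.bypass.support}.ncard := by
      rw [q.bypass_isPath.support_nodup.ncard_setOf_mem, Walk.length_support]
    _ ≤ _ := Set.ncard_le_ncard (fun x hx => hq x (q.support_bypass_subset_support hx))
      (Set.toFinite _)

lemma sSup_sInf_ncard_image_fst_inflate (hA : Admissible G enc) (hφ : IsDegTwoDist G φ) {d : ℕ}
    (hle : ∀ u, φ u ≤ d) {u : V} (hu : φ u = d) :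
    sSup (Set.range fun v : V × Fin 9 =>
        sInf {n : ℕ | ∃ (w : V × Fin 9) (α : (inflate G enc).Walk v w), α.IsPath ∧
          hdeg (inflate G enc) w = 2 ∧ n = (Prod.fst '' {x | x ∈ α.support}).ncard}) = d + 1 := by
  refine Nat.sSup_range_sInf_eq (fun a => ?_) ⟨(u, 0), ?_⟩
  · obtain ⟨w, α, hα, hw, hn⟩ := exists_isPath_inflate_ncard_le hA hφ a
    exact ⟨_, ⟨w, α, hα, hw, rfl⟩, hn.trans (by have := hle a.1; omega)⟩
  · rintro _ ⟨w, α, -, hw, rfl⟩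
    exact hu ▸ le_ncard_image_fst_support hA hφ α hw

end CopyRadius

/-- The largest distance `d` from a vertex of `A` to the 2-valent vertices is attained at both
ends of an edge; the port on that edge is then at distance `4 d + 3` after inflation. -/
structure DegTwoRadius (A : GE) (d : ℕ) : Prop where
  admissible : Admissible A.G A.enc
  exists_dist : ∃ φ, IsDegTwoDist A.G φ ∧ (∀ u, φ u ≤ d) ∧
    ∃ u v, A.G.Adj u v ∧ φ u = d ∧ φ v = d

lemma DegTwoRadius.step {A : GE} [Finite A.V] {d : ℕ} (h : DegTwoRadius A d) :
    DegTwoRadius (step A) (4 * d + 3) := by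
  obtain ⟨φ, hφ, hle, u, v, huv, hu, hv⟩ := h.exists_dist
  refine ⟨admissible_inflate h.admissible, liftDist A.G A.enc φ,
    isDegTwoDist_liftDist h.admissible hφ, fun ⟨w, i⟩ => ?_,
    (u, port A.G A.enc u v), (v, port A.G A.enc v u), Or.inr ⟨huv, rfl, rfl⟩, ?_, ?_⟩
  · have := liftDist_le (enc := A.enc) hφ w i
    have := hle w
    omega
  · have := liftDist_le (enc := A.enc) hφ u (port A.G A.enc u v)
    have := min_le_liftDist_port h.admissible hφ huv
    omega
  · have := liftDist_le (enc := A.enc) hφ v (port A.G A.enc v u)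
    have := min_le_liftDist_port h.admissible hφ huv.symm
    omega

instance finite_ItP : ∀ k, Finite (ItP k).V
  | 0 => inferInstanceAs (Finite (Fin 9))
  | k + 1 => have := finite_ItP k; inferInstanceAs (Finite ((ItP k).V × Fin 9))

lemma degTwoRadius_P : DegTwoRadius ⟨Fin 9, Pgr, Fin.val⟩ 1 := by
  refine ⟨⟨Fin.val_injective, fun i => ?_⟩, fun i => if i ∈ pPorts then 0 else 1,
    ⟨fun i hi => ?_, fun i j _ => ?_, fun i => ?_⟩, fun i => ?_, 0, 1, by decide, rfl, rfl⟩
  · rw [hdeg_Pgr]; split_ifs <;> simp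
  · rw [hdeg_Pgr] at hi; split_ifs at hi ⊢ <;> simp_all
  · split_ifs <;> omega
  · by_cases hi : i ∈ pPorts
    · exact Or.inl (by rw [hdeg_Pgr, if_pos hi])
    · obtain ⟨j, hj, hij⟩ := (mem_pPorts_or_exists_adj i).resolve_left hi
      exact Or.inr ⟨j, hij, by simp [hi, hj]⟩
  · dsimp only
    split_ifs <;> omega

lemma degTwoRadius_ItP (k : ℕ) : DegTwoRadius (ItP k) (2 ^ (2 * k + 1) - 1) := by
  induction k with
  | zero => exact degTwoRadius_P
  | succ k ih =>
    have hpow : 2 ^ (2 * (k + 1) + 1) = 4 * 2 ^ (2 * k + 1) := by ring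
    have hpos := Nat.one_le_two_pow (n := 2 * k + 1)
    rw [hpow, show 4 * 2 ^ (2 * k + 1) - 1 = 4 * (2 ^ (2 * k + 1) - 1) + 3 by omega]
    exact ih.step

lemma sSup_sInf_ncard_const_P :
    sSup (Set.range fun v : Fin 9 =>
        sInf {n : ℕ | ∃ (w : Fin 9) (α : Pgr.Walk v w), α.IsPath ∧ hdeg Pgr w = 2 ∧
          n = ((fun _ => ()) '' {x | x ∈ α.support}).ncard}) = 1 := by
  have hconst {v w : Fin 9} (α : Pgr.Walk v w) :
      ((fun _ => ()) '' {x | x ∈ α.support}).ncard = 1 := by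
    rw [Set.Nonempty.image_const ⟨v, α.start_mem_support⟩, Set.ncard_singleton]
  refine Nat.sSup_range_sInf_eq (fun v => ?_) ⟨0, ?_⟩
  · obtain ⟨α⟩ := reachable_of_mem_pPorts (show 7 ∈ pPorts by decide) v
    exact ⟨1, ⟨7, α.bypass, α.bypass_isPath, by rw [hdeg_Pgr]; decide, (hconst _).symm⟩, le_rfl⟩
  · rintro _ ⟨w, α, -, -, rfl⟩
    exact (hconst α).ge

/-- `p₀ = 1` and `p_{k+1} = 2^{2k+1}`, where `p_k` is the maximum
over vertices `v` of `Pᵏ` of the minimum, over paths `α` from `v` to the set of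
2-valent vertices, of the number of distinct copies of `P` met by `α` (the copies
of `P` in `P^{k+1}` being the fibers of the projection `Prod.fst`). -/
theorem stmt_17 (k : ℕ) :
    (sSup (Set.range fun v : (ItP 0).V =>
        sInf { n : ℕ | ∃ (w : (ItP 0).V) (α : (ItP 0).G.Walk v w), α.IsPath ∧
          hdeg (ItP 0).G w = 2 ∧
          n = ((fun _ => ()) '' {x | x ∈ α.support}).ncard }) = 1) ∧
    sSup (Set.range fun v : (ItP (k + 1)).V =>
        sInf { n : ℕ | ∃ (w : (ItP (k + 1)).V) (α : (ItP (k + 1)).G.Walk v w), α.IsPath ∧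
          hdeg (ItP (k + 1)).G w = 2 ∧
          n = ((Prod.fst : (ItP k).V × Fin 9 → (ItP k).V) ''
                {x : (ItP k).V × Fin 9 | x ∈ α.support}).ncard }) = 2 ^ (2 * k + 1) := by
  have hradius := degTwoRadius_ItP k
  obtain ⟨φ, hφ, hle, u, -, -, hu, -⟩ := hradius.exists_dist
  refine ⟨sSup_sInf_ncard_const_P,
    (sSup_sInf_ncard_image_fst_inflate hradius.admissible hφ hle hu).trans ?_⟩
  have := Nat.one_le_two_pow (n := 2 * k + 1)
  omega
end
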